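/- arXiv:1602.03924 — 2 statements merged into one kernel-verified Lean document; each statement's English description precedes it below -/
import Mathlib

section
/- If there exists a p-evident C-indicating event, then there exists a unique largest p-evident C-indicating event, i.e., a p-evident C-indicating event that contains every p-evident C-indicating event. -/
open Finset

variable {Ω : Type*}

/-- The conditional probability `P_i(E | ω) = μ(E ∩ Π_i(ω)) / μ(Π_i(ω))`,
where `part i ω` is the cell of player `i`'s information partition containing `ω`. -/
noncomputable def condP [Fintype Ω] [DecidableEq Ω] (μ : Ω → ℝ)
    (part : Fin 2 → Ω → Finset Ω) (i : Fin 2) (E : Finset Ω) (ω : Ω) : ℝ :=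
  (∑ x ∈ E ∩ part i ω, μ x) / (∑ x ∈ part i ω, μ x)

/-- `E` is `p`-evident: every player `p`-believes `E` at every state of `E`. -/
def pEvident [Fintype Ω] [DecidableEq Ω] (μ : Ω → ℝ)
    (part : Fin 2 → Ω → Finset Ω) (p : ℝ) (E : Finset Ω) : Prop :=
  ∀ i : Fin 2, ∀ ω ∈ E, p ≤ condP μ part i E ω

/-- `E` is a `p`-evident `C`-indicating event. -/
def pEvidentInd [Fintype Ω] [DecidableEq Ω] (μ : Ω → ℝ)
    (part : Fin 2 → Ω → Finset Ω) (p : ℝ) (C E : Finset Ω) : Prop :=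
  pEvident μ part p E ∧ ∀ i : Fin 2, ∀ ω ∈ E, p ≤ condP μ part i C ω

/-- `E` is the largest `p`-evident `C`-indicating event. -/
def isLargestInd [Fintype Ω] [DecidableEq Ω] (μ : Ω → ℝ)
    (part : Fin 2 → Ω → Finset Ω) (p : ℝ) (C E : Finset Ω) : Prop :=
  pEvidentInd μ part p C E ∧ ∀ F : Finset Ω, pEvidentInd μ part p C F → F ⊆ E

/-- `p` is the `C`-evidence level of `E`: the maximum `q` for which `E` is a
`q`-evident `C`-indicating event. -/
def isEvidenceLevel [Fintype Ω] [DecidableEq Ω] (μ : Ω → ℝ)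
    (part : Fin 2 → Ω → Finset Ω) (C E : Finset Ω) (p : ℝ) : Prop :=
  IsGreatest {q : ℝ | pEvidentInd μ part q C E} p

/-- `G` is the maximally evident `C`-indicating superset of `F`. -/
def isMaxEvidentSup [Fintype Ω] [DecidableEq Ω] (μ : Ω → ℝ)
    (part : Fin 2 → Ω → Finset Ω) (C F G : Finset Ω) : Prop :=
  F ⊆ G ∧ ∃ p : ℝ, isEvidenceLevel μ part C G p ∧ isLargestInd μ part p C G ∧
    ∀ H : Finset Ω, F ⊆ H → ∀ q : ℝ, isEvidenceLevel μ part C H q → q ≤ p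

/-- `E` is a maximally evident `C`-indicating event: it is the maximally evident
`C`-indicating superset of some nonempty event. -/
def isMaxEvident [Fintype Ω] [DecidableEq Ω] (μ : Ω → ℝ)
    (part : Fin 2 → Ω → Finset Ω) (C E : Finset Ω) : Prop :=
  ∃ F : Finset Ω, F.Nonempty ∧ isMaxEvidentSup μ part C F E

/-- `E` is a super-`p`-evident `C`-indicating event. -/
def superEvidentInd [Fintype Ω] [DecidableEq Ω] (μ : Ω → ℝ)
    (part : Fin 2 → Ω → Finset Ω) (p : ℝ) (C E : Finset Ω) : Prop :=
  ∀ i : Fin 2, ∀ ω ∈ E, p < condP μ part i E ω ∧ p < condP μ part i C ω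

/-- `E` is the largest super-evident `C`-indicating subset of `F`. -/
def isLargestSuperSub [Fintype Ω] [DecidableEq Ω] (μ : Ω → ℝ)
    (part : Fin 2 → Ω → Finset Ω) (C F E : Finset Ω) : Prop :=
  E ⊆ F ∧ ∃ p : ℝ, isEvidenceLevel μ part C F p ∧ superEvidentInd μ part p C E ∧
    ∀ G : Finset Ω, G ⊆ F → superEvidentInd μ part p C G → G ⊆ E

section

variable [Fintype Ω] [DecidableEq Ω] {μ : Ω → ℝ} {part : Fin 2 → Ω → Finset Ω} {p : ℝ}
  {C E F : Finset Ω}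

theorem condP_mono (hμ : ∀ ω, 0 ≤ μ ω) (i : Fin 2) (ω : Ω) (hEF : E ⊆ F) :
    condP μ part i E ω ≤ condP μ part i F ω := by
  unfold condP
  gcongr
  · exact Finset.sum_nonneg fun x _ => hμ x
  · exact fun x _ _ => hμ x

theorem pEvidentInd_empty : pEvidentInd μ part p C ∅ :=
  ⟨fun _ _ h => absurd h (Finset.notMem_empty _), fun _ _ h => absurd h (Finset.notMem_empty _)⟩

theorem pEvidentInd.union (hμ : ∀ ω, 0 ≤ μ ω) (hE : pEvidentInd μ part p C E)
    (hF : pEvidentInd μ part p C F) : pEvidentInd μ part p C (E ∪ F) := by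
  refine ⟨fun i ω hω => ?_, fun i ω hω => ?_⟩
  · rcases Finset.mem_union.1 hω with hωE | hωF
    · exact (hE.1 i ω hωE).trans (condP_mono hμ i ω Finset.subset_union_left)
    · exact (hF.1 i ω hωF).trans (condP_mono hμ i ω Finset.subset_union_right)
  · rcases Finset.mem_union.1 hω with hωE | hωF
    · exact hE.2 i ω hωE
    · exact hF.2 i ω hωF

/-- The union of all `p`-evident `C`-indicating events is the largest one. -/
theorem exists_isLargestInd (hμ : ∀ ω, 0 ≤ μ ω) : ∃ G, isLargestInd μ part p C G := by
  classical
  let S := Finset.univ.filter (pEvidentInd μ part p C)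
  refine ⟨S.sup id, ?_, fun F hF => Finset.le_sup (f := id) (by simpa [S] using hF)⟩
  exact Finset.sup_induction pEvidentInd_empty (fun _ hE _ hF => hE.union hμ hF)
    (fun E hE => (Finset.mem_filter.1 hE).2)

theorem isLargestInd.unique (hE : isLargestInd μ part p C E) (hF : isLargestInd μ part p C F) :
    E = F :=
  (hF.2 E hE.1).antisymm (hE.2 F hF.1)

end

theorem existsUnique_largest_pEvidentInd_general [Fintype Ω] [DecidableEq Ω]
    (μ : Ω → ℝ) (part : Fin 2 → Ω → Finset Ω)
    (hμpos : ∀ ω : Ω, 0 < μ ω)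
    (p : ℝ) (C : Finset Ω) :
    ∃! E : Finset Ω, isLargestInd μ part p C E := by
  obtain ⟨G, hG⟩ := exists_isLargestInd (part := part) (p := p) (C := C) fun ω => (hμpos ω).le
  exact ⟨G, hG, fun E hE => hE.unique hG⟩

/-- If some `p`-evident `C`-indicating event exists, then there is a unique largest one. -/
theorem existsUnique_largest_pEvidentInd [Fintype Ω] [DecidableEq Ω] [Nonempty Ω]
    (μ : Ω → ℝ) (part : Fin 2 → Ω → Finset Ω)
    (hμpos : ∀ ω : Ω, 0 < μ ω) (hμsum : ∑ ω : Ω, μ ω = 1)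
    (hmem : ∀ (i : Fin 2) (ω : Ω), ω ∈ part i ω)
    (hcell : ∀ (i : Fin 2) (ω ω' : Ω), ω' ∈ part i ω → part i ω' = part i ω)
    (p : ℝ) (C : Finset Ω)
    (h : ∃ E : Finset Ω, pEvidentInd μ part p C E) :
    ∃! E : Finset Ω, isLargestInd μ part p C E :=
  existsUnique_largest_pEvidentInd_general μ part hμpos p C
end

section
/- Fix p > 0 and a player i ∈ {0,1}, and let E be the largest p-evident C-indicating event. Let B = {ω' ∈ Ω : P_{1−i}(E | ω') ≥ p} be the event that player 1−i p-believes E. If at some state ω player i p-believes B (P_i(B | ω) ≥ p) and player i p-believes C (P_i(C | ω) ≥ p), then player i p-believes E at ω (P_i(E | ω) ≥ p). -/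
/-! Add to `E` the states of player `i`'s cell at `ω` where player `1 - i` `p`-believes `E`.
The enlarged event is still `p`-evident and `C`-indicating: at those states player `i` holds
the beliefs it holds at `ω`, and player `1 - i` `p`-believes `E`, hence (as `p > 0`) shares a
cell with a state of `E` and so `p`-believes `C`. Maximality of `E` then puts all those states
into `E`. -/
open Finset

variable {Ω : Type*}

lemma Fin.eq_or_eq_one_sub (i j : Fin 2) : j = i ∨ j = 1 - i := by
  revert i j
  decide

section Beliefs

variable [Fintype Ω] [DecidableEq Ω] {μ : Ω → ℝ} {part : Fin 2 → Ω → Finset Ω}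
  {i : Fin 2} {p : ℝ} {A A' C E : Finset Ω} {ω ω' : Ω}

lemma condP_le_condP_of_inter_subset (hμ : ∀ x, 0 ≤ μ x) (h : A ∩ part i ω ⊆ A') :
    condP μ part i A ω ≤ condP μ part i A' ω := by
  refine div_le_div_of_nonneg_right ?_ (sum_nonneg fun x _ => hμ x)
  exact sum_le_sum_of_subset_of_nonneg (subset_inter h inter_subset_right) fun x _ _ => hμ x

lemma condP_congr_cell (h : part i ω' = part i ω) :
    condP μ part i A ω' = condP μ part i A ω := by
  simp only [condP, h]

lemma nonempty_inter_cell_of_le_condP (hp : 0 < p) (h : p ≤ condP μ part i A ω) :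
    (A ∩ part i ω).Nonempty := by
  rw [nonempty_iff_ne_empty]
  intro hempty
  simp only [condP, hempty, sum_empty, zero_div] at h
  linarith

lemma le_condP_of_le_condP_indicating (hp : 0 < p)
    (hcell : ∀ x y, y ∈ part i x → part i y = part i x)
    (hEC : ∀ x ∈ E, p ≤ condP μ part i C x) (h : p ≤ condP μ part i E ω) :
    p ≤ condP μ part i C ω := by
  obtain ⟨x, hx⟩ := nonempty_inter_cell_of_le_condP hp h
  obtain ⟨hxE, hxω⟩ := mem_inter.1 hx
  rw [← condP_congr_cell (hcell ω x hxω)]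
  exact hEC x hxE

lemma pEvidentInd_union_inter_cell {B : Finset Ω} (hμ : ∀ x, 0 ≤ μ x) (hp : 0 < p)
    (hcell : ∀ j x y, y ∈ part j x → part j y = part j x)
    (hE : pEvidentInd μ part p C E) (hB : ∀ x ∈ B, p ≤ condP μ part (1 - i) E x)
    (h1 : p ≤ condP μ part i B ω) (h2 : p ≤ condP μ part i C ω) :
    pEvidentInd μ part p C (E ∪ B ∩ part i ω) := by
  set F := E ∪ B ∩ part i ω
  have hEF : ∀ j x, condP μ part j E x ≤ condP μ part j F x := fun j x =>
    condP_le_condP_of_inter_subset hμ (inter_subset_left.trans subset_union_left)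
  have hF : ∀ j, ∀ x ∈ F, p ≤ condP μ part j F x ∧ p ≤ condP μ part j C x := by
    intro j x hx
    rcases mem_union.1 hx with hxE | hxB
    · exact ⟨(hE.1 j x hxE).trans (hEF j x), hE.2 j x hxE⟩
    obtain ⟨hxB, hxω⟩ := mem_inter.1 hxB
    rcases Fin.eq_or_eq_one_sub i j with rfl | rfl
    · have hBF : condP μ part j B ω ≤ condP μ part j F ω :=
        condP_le_condP_of_inter_subset hμ subset_union_right
      rw [condP_congr_cell (hcell j ω x hxω), condP_congr_cell (hcell j ω x hxω)]
      exact ⟨h1.trans hBF, h2⟩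
    · exact ⟨(hB x hxB).trans (hEF _ x),
        le_condP_of_le_condP_indicating hp (hcell _) (hE.2 _) (hB x hxB)⟩
  exact ⟨fun j x hx => (hF j x hx).1, fun j x hx => (hF j x hx).2⟩

end Beliefs

theorem pBelieves_largest_of_pBelieves_other_general [Fintype Ω] [DecidableEq Ω]
    (μ : Ω → ℝ) (part : Fin 2 → Ω → Finset Ω)
    (hμpos : ∀ ω : Ω, 0 < μ ω)
    (hcell : ∀ (i : Fin 2) (ω ω' : Ω), ω' ∈ part i ω → part i ω' = part i ω)
    (p : ℝ) (hp : 0 < p) (i : Fin 2) (C E B : Finset Ω)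
    (hE : isLargestInd μ part p C E)
    (hB : ∀ ω' : Ω, ω' ∈ B ↔ p ≤ condP μ part (1 - i) E ω')
    (ω : Ω)
    (h1 : p ≤ condP μ part i B ω) (h2 : p ≤ condP μ part i C ω) :
    p ≤ condP μ part i E ω := by
  have hμ : ∀ x, 0 ≤ μ x := fun x => (hμpos x).le
  have hF := pEvidentInd_union_inter_cell hμ hp hcell hE.1 (fun x hx => (hB x).1 hx) h1 h2
  have hBE : B ∩ part i ω ⊆ E := subset_union_right.trans (hE.2 _ hF)
  exact h1.trans (condP_le_condP_of_inter_subset hμ hBE)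

/-- If player `i` `p`-believes that player `1 - i` `p`-believes the largest `p`-evident
`C`-indicating event `E`, and player `i` `p`-believes `C`, then player `i` `p`-believes
`E`. -/
theorem pBelieves_largest_of_pBelieves_other [Fintype Ω] [DecidableEq Ω] [Nonempty Ω]
    (μ : Ω → ℝ) (part : Fin 2 → Ω → Finset Ω)
    (hμpos : ∀ ω : Ω, 0 < μ ω) (hμsum : ∑ ω : Ω, μ ω = 1)
    (hmem : ∀ (i : Fin 2) (ω : Ω), ω ∈ part i ω)
    (hcell : ∀ (i : Fin 2) (ω ω' : Ω), ω' ∈ part i ω → part i ω' = part i ω)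
    (p : ℝ) (hp : 0 < p) (i : Fin 2) (C E B : Finset Ω)
    (hE : isLargestInd μ part p C E)
    (hB : ∀ ω' : Ω, ω' ∈ B ↔ p ≤ condP μ part (1 - i) E ω')
    (ω : Ω)
    (h1 : p ≤ condP μ part i B ω) (h2 : p ≤ condP μ part i C ω) :
    p ≤ condP μ part i E ω :=
  pBelieves_largest_of_pBelieves_other_general μ part hμpos hcell p hp i C E B hE hB ω h1 h2
end
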